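/- Let A be a set and let f, g : A → S² be functions into the unit sphere in ℝ³ satisfying the constraint C: for all x, y ∈ A and all R_x, R_y ∈ SO(3), R_x f(x) = R_y f(y) if and only if R_x g(x) = R_y g(y). Then for all x, y ∈ A, ⟨f(x), f(y)⟩ = ⟨g(x), g(y)⟩. -/

import Mathlib

/-!
The half-turn about the axis `f x` fixes `f x`, so by the constraint it also fixes `g x`; hence
`g x = c • f x` with `|c| = 1`. A rotation carrying `f x` to `f y` then carries `g x` to `g y`,
so `g y = c • f y` with the same `c`, and `⟪g x, g y⟫ = c² ⟪f x, f y⟫ = ⟪f x, f y⟫`.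
-/

open Matrix

/-- `SO3 R` means `R` is a real 3×3 special orthogonal (rotation) matrix. -/
def SO3 (R : Matrix (Fin 3) (Fin 3) ℝ) : Prop := Rᵀ * R = 1 ∧ R.det = 1

/-- Action of a 3×3 matrix on ℝ³ by matrix-vector multiplication. -/
noncomputable def act (R : Matrix (Fin 3) (Fin 3) ℝ) (v : EuclideanSpace ℝ (Fin 3)) :
    EuclideanSpace ℝ (Fin 3) := Matrix.toEuclideanLin R v

open WithLp RealInnerProductSpace

lemma exists_norm_eq_one_inner_eq_zero {E : Type*} [NormedAddCommGroup E] [InnerProductSpace ℝ E]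
    [FiniteDimensional ℝ E] (hE : 2 ≤ Module.finrank ℝ E) (u : E) :
    ∃ w : E, ‖w‖ = 1 ∧ ⟪u, w⟫ = 0 := by
  have hpos : 0 < Module.finrank ℝ (ℝ ∙ u)ᗮ := by
    have := Submodule.finrank_add_finrank_orthogonal (ℝ ∙ u)
    have := finrank_span_le_card (R := ℝ) ({u} : Set E)
    simp only [Set.toFinset_singleton, Finset.card_singleton] at this
    omega
  have := Module.nontrivial_of_finrank_pos hpos
  obtain ⟨w, hw⟩ := exists_norm_eq (ℝ ∙ u)ᗮ zero_le_one
  exact ⟨w, by simpa using hw, Submodule.mem_orthogonal_singleton_iff_inner_right.mp w.2⟩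

section HalfTurn

variable {ι : Type*}

noncomputable def halfTurn [DecidableEq ι] (u : EuclideanSpace ℝ ι) : Matrix ι ι ℝ :=
  (2 : ℝ) • vecMulVec (ofLp u) (ofLp u) - 1

lemma dotProduct_ofLp_self_eq_one [Fintype ι] {u : EuclideanSpace ℝ ι} (hu : ‖u‖ = 1) :
    ofLp u ⬝ᵥ ofLp u = 1 := by
  have := real_inner_self_eq_norm_sq u
  rwa [EuclideanSpace.inner_eq_star_dotProduct, star_trivial, hu, one_pow] at this

lemma halfTurn_transpose [DecidableEq ι] (u : EuclideanSpace ℝ ι) :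
    (halfTurn u)ᵀ = halfTurn u := by
  simp [halfTurn, transpose_vecMulVec]

lemma halfTurn_mul_self [Fintype ι] [DecidableEq ι] {u : EuclideanSpace ℝ ι}
    (hu : ‖u‖ = 1) : halfTurn u * halfTurn u = 1 := by
  simp only [halfTurn, sub_mul, mul_sub, smul_mul_smul, vecMulVec_mul_vecMulVec,
    dotProduct_ofLp_self_eq_one hu, one_smul, mul_one, one_mul, mul_smul]
  module

lemma det_halfTurn {u : EuclideanSpace ℝ (Fin 3)} (hu : ‖u‖ = 1) : (halfTurn u).det = 1 := by
  have hneg : halfTurn u =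
      -(1 + replicateCol Unit (-(2 : ℝ) • ofLp u) * replicateRow Unit (ofLp u)) := by
    rw [halfTurn, ← vecMulVec_eq, smul_vecMulVec]
    module
  rw [hneg, det_neg, det_one_add_replicateCol_mul_replicateRow, dotProduct_smul,
    dotProduct_ofLp_self_eq_one hu]
  norm_num

end HalfTurn

lemma act_one (v : EuclideanSpace ℝ (Fin 3)) : act 1 v = v := by
  simp [act]

lemma act_smul (R : Matrix (Fin 3) (Fin 3) ℝ) (c : ℝ) (v : EuclideanSpace ℝ (Fin 3)) :
    act R (c • v) = c • act R v :=
  map_smul (toEuclideanLin R) c v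

lemma act_halfTurn (u v : EuclideanSpace ℝ (Fin 3)) :
    act (halfTurn u) v = (2 * ⟪u, v⟫) • u - v := by
  change toLp 2 (halfTurn u *ᵥ ofLp v) = _
  ext i
  simp [halfTurn, sub_mulVec, smul_mulVec, vecMulVec_mulVec,
    EuclideanSpace.inner_eq_star_dotProduct, dotProduct_comm, mul_assoc]

lemma SO3_one : SO3 1 := ⟨by simp, det_one⟩

lemma SO3_halfTurn {u : EuclideanSpace ℝ (Fin 3)} (hu : ‖u‖ = 1) : SO3 (halfTurn u) := by
  rw [SO3, halfTurn_transpose]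
  exact ⟨halfTurn_mul_self hu, det_halfTurn hu⟩

lemma act_halfTurn_self {u : EuclideanSpace ℝ (Fin 3)} (hu : ‖u‖ = 1) :
    act (halfTurn u) u = u := by
  rw [act_halfTurn, real_inner_self_eq_norm_sq, hu]
  module

lemma eq_inner_smul_of_act_halfTurn_eq_self {u v : EuclideanSpace ℝ (Fin 3)}
    (h : act (halfTurn u) v = v) : v = ⟪u, v⟫ • u := by
  rw [act_halfTurn] at h
  linear_combination (norm := module) (-(1 / 2 : ℝ)) • h

lemma exists_halfTurn_act_eq {u v : EuclideanSpace ℝ (Fin 3)} (hu : ‖u‖ = 1)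
    (hv : ‖v‖ = 1) :
    ∃ m, ‖m‖ = 1 ∧ act (halfTurn m) u = v := by
  suffices ∃ m, ‖m‖ = 1 ∧ (2 * ⟪m, u⟫) • m = u + v by
    obtain ⟨m, hm, h⟩ := this
    exact ⟨m, hm, by rw [act_halfTurn, h]; abel⟩
  -- The axis is the bisector of `u` and `v`, or any axis orthogonal to `u` when `v = -u`.
  by_cases h : u + v = 0
  · obtain ⟨m, hm, hum⟩ := exists_norm_eq_one_inner_eq_zero (by simp) u
    exact ⟨m, hm, by rw [real_inner_comm, hum, h, mul_zero, zero_smul]⟩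
  · refine ⟨‖u + v‖⁻¹ • (u + v), norm_smul_inv_norm h, ?_⟩
    have hsq : ‖u + v‖ ^ 2 = 2 * ⟪u + v, u⟫ := by
      rw [← real_inner_self_eq_norm_sq, inner_add_right, inner_add_left, inner_add_left,
        real_inner_self_eq_norm_sq, real_inner_self_eq_norm_sq, hu, hv, real_inner_comm]
      ring
    have hcoef : 2 * (‖u + v‖⁻¹ * ⟪u + v, u⟫) * ‖u + v‖⁻¹ = 1 := by
      field_simp
      linarith
    rw [real_inner_smul_left, smul_smul, hcoef, one_smul]

lemma exists_SO3_act_eq {u v : EuclideanSpace ℝ (Fin 3)} (hu : ‖u‖ = 1) (hv : ‖v‖ = 1) :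
    ∃ R, SO3 R ∧ act R u = v :=
  let ⟨m, hm, h⟩ := exists_halfTurn_act_eq hu hv
  ⟨halfTurn m, SO3_halfTurn hm, h⟩

theorem stmt_4 {A : Type*} (f g : A → EuclideanSpace ℝ (Fin 3))
    (hf : ∀ x, ‖f x‖ = 1) (hg : ∀ x, ‖g x‖ = 1)
    (hC : ∀ x y : A, ∀ Rx Ry : Matrix (Fin 3) (Fin 3) ℝ, SO3 Rx → SO3 Ry →
        (act Rx (f x) = act Ry (f y) ↔ act Rx (g x) = act Ry (g y))) :
    ∀ x y : A, (inner ℝ (f x) (f y) : ℝ) = inner ℝ (g x) (g y) := by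
  intro x y
  set c := ⟪f x, g x⟫
  have hgx : g x = c • f x := by
    refine eq_inner_smul_of_act_halfTurn_eq_self ?_
    have hfix := (hC x x _ 1 (SO3_halfTurn (hf x)) SO3_one).mp
      (by rw [act_one, act_halfTurn_self (hf x)])
    rwa [act_one] at hfix
  obtain ⟨R, hR, hRf⟩ := exists_SO3_act_eq (hf x) (hf y)
  have hgy : g y = c • f y := by
    have hmove := (hC x y R 1 hR SO3_one).mp (by rw [hRf, act_one])
    rw [← act_one (g y), ← hmove, hgx, act_smul, hRf]
  have hc : c * c = 1 := by
    have habs : |c| = 1 := by simpa [hgx, norm_smul, hf x] using hg x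
    rw [← abs_mul_self, abs_mul, habs, one_mul]
  rw [hgx, hgy, real_inner_smul_left, real_inner_smul_right, ← mul_assoc, hc, one_mul]
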